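/- arXiv:2208.05715 — 2 statements merged into one kernel-verified Lean document; each statement's English description precedes it below -/
import Mathlib

section
/- (Constantin–E–Titi commutator identity) For any f, g ∈ L²_loc(R^d) and standard mollifier η_ε, (fg)^ε(x) − f^ε(x)g^ε(x) = ∫ η_ε(y)[f(x−y)−f(x)][g(x−y)−g(x)] dy − (f−f^ε)(x)·(g−g^ε)(x). -/
open MeasureTheory ENNReal Filter Topology

noncomputable section

variable {d : ℕ}

/-- A standard mollifier: smooth, nonnegative, supported in the closed unit ball,
with unit mass. -/
structure IsStdMollifier (η : EuclideanSpace ℝ (Fin d) → ℝ) : Prop where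
  smooth : ContDiff ℝ (⊤ : ℕ∞) η
  nonneg : ∀ x, 0 ≤ η x
  supp : Function.support η ⊆ Metric.closedBall 0 1
  mass : ∫ x, η x = 1

/-- Spatial mollification `f^ε = f * η_ε`, with `η_ε(y) = ε^{-d} η(y/ε)`. -/
def mollify (η : EuclideanSpace ℝ (Fin d) → ℝ) (ε : ℝ)
    (f : EuclideanSpace ℝ (Fin d) → ℝ) (x : EuclideanSpace ℝ (Fin d)) : ℝ :=
  ∫ y, (ε ^ d)⁻¹ * η (ε⁻¹ • y) * f (x - y)

/-- The homogeneous Besov seminorm `Ḃ^α_{q,∞}` via finite differences: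
`sup_{y ≠ 0} ‖f(·−y) − f‖_{L^q}/|y|^α`. -/
def besovSeminorm (α : ℝ) (q : ℝ≥0∞) (f : EuclideanSpace ℝ (Fin d) → ℝ) : ℝ≥0∞ :=
  ⨆ y : {y : EuclideanSpace ℝ (Fin d) // y ≠ 0},
    eLpNorm (fun x => f (x - (y : EuclideanSpace ℝ (Fin d))) - f x) q volume /
      ENNReal.ofReal (‖(y : EuclideanSpace ℝ (Fin d))‖ ^ α)

/-- The `L^p` norm in time on `(0,T)` of an `ℝ≥0∞`-valued quantity. -/
def lpT (T : ℝ) (p : ℝ≥0∞) (h : ℝ → ℝ≥0∞) : ℝ≥0∞ :=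
  if p = ∞ then essSup h (volume.restrict (Set.Ioc (0 : ℝ) T))
  else (∫⁻ t in Set.Ioc (0 : ℝ) T, h t ^ p.toReal) ^ (1 / p.toReal)

/-- Constantin–E–Titi commutator identity: for `f, g ∈ L²_loc(ℝ^d)` and a
standard mollifier `η_ε`,
`(fg)^ε − f^ε g^ε = ∫ η_ε(y)[f(x−y)−f(x)][g(x−y)−g(x)] dy − (f−f^ε)(g−g^ε)(x)`
almost everywhere. -/
theorem constantin_e_titi_identity
    (hd : 0 < d) (η : EuclideanSpace ℝ (Fin d) → ℝ) (hη : IsStdMollifier η)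
    (ε : ℝ) (hε : 0 < ε)
    (f g : EuclideanSpace ℝ (Fin d) → ℝ)
    (hfm : AEStronglyMeasurable f volume) (hgm : AEStronglyMeasurable g volume)
    (hf2 : LocallyIntegrable (fun x => f x ^ 2) volume)
    (hg2 : LocallyIntegrable (fun x => g x ^ 2) volume) :
    ∀ᵐ x : EuclideanSpace ℝ (Fin d),
      mollify η ε (fun z => f z * g z) x - mollify η ε f x * mollify η ε g x =
        (∫ y, (ε ^ d)⁻¹ * η (ε⁻¹ • y) * ((f (x - y) - f x) * (g (x - y) - g x))) -
          (f x - mollify η ε f x) * (g x - mollify η ε g x) := by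
  set φ : EuclideanSpace ℝ (Fin d) → ℝ := fun y => (ε ^ d)⁻¹ * η (ε⁻¹ • y) with hφ
  have hφc : Continuous φ :=
    continuous_const.mul (hη.smooth.continuous.comp (continuous_const_smul _))
  have hφs : HasCompactSupport φ := by
    apply HasCompactSupport.intro (K := Metric.closedBall 0 ε) (isCompact_closedBall 0 ε)
    intro y hy
    have h0 : η (ε⁻¹ • y) = 0 := by
      by_contra h
      have := hη.supp (Function.mem_support.2 h)
      simp only [Metric.mem_closedBall, dist_zero_right, norm_smul, norm_inv,
        Real.norm_eq_abs, abs_of_pos hε] at this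
      have hy' : ε < ‖y‖ := by
        simpa [dist_zero_right] using hy
      have : ‖y‖ ≤ ε := by
        rw [inv_mul_le_iff₀ hε, mul_one] at this
        exact this
      linarith
    simp [hφ, h0]
  -- local integrability
  have hfl : LocallyIntegrable f volume := by
    refine (hf2.add (locallyIntegrable_const 1)).mono hfm (ae_of_all _ fun x => ?_)
    have h1 : |f x| ≤ f x ^ 2 + 1 := by nlinarith [abs_nonneg (f x), sq_abs (f x)]
    have h2 : (0:ℝ) ≤ f x ^ 2 + 1 := by positivity
    simpa [Real.norm_eq_abs, abs_of_nonneg h2] using h1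
  have hgl : LocallyIntegrable g volume := by
    refine (hg2.add (locallyIntegrable_const 1)).mono hgm (ae_of_all _ fun x => ?_)
    have h1 : |g x| ≤ g x ^ 2 + 1 := by nlinarith [abs_nonneg (g x), sq_abs (g x)]
    have h2 : (0:ℝ) ≤ g x ^ 2 + 1 := by positivity
    simpa [Real.norm_eq_abs, abs_of_nonneg h2] using h1
  have hfgl : LocallyIntegrable (fun x => f x * g x) volume := by
    refine (hf2.add hg2).mono (hfm.mul hgm) (ae_of_all _ fun x => ?_)
    have h1 : |f x * g x| ≤ f x ^ 2 + g x ^ 2 := by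
      rw [abs_mul]
      nlinarith [abs_nonneg (f x), abs_nonneg (g x), sq_abs (f x), sq_abs (g x)]
    have h2 : (0:ℝ) ≤ f x ^ 2 + g x ^ 2 := by positivity
    simpa [Real.norm_eq_abs, abs_of_nonneg h2, abs_mul] using h1
  -- total mass of φ is 1
  have hεd : (0:ℝ) < ε ^ d := pow_pos hε d
  have hmass : ∫ y, φ y = 1 := by
    have h := MeasureTheory.Measure.integral_comp_inv_smul
      (volume : Measure (EuclideanSpace ℝ (Fin d))) η ε
    simp only [hφ, integral_const_mul]
    rw [h, finrank_euclideanSpace, Fintype.card_fin, abs_of_pos hεd, hη.mass, smul_eq_mul,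
      mul_one, inv_mul_cancel₀ hεd.ne']
  filter_upwards with x
  have hfg_int : Integrable (fun y => φ y * (f (x - y) * g (x - y))) volume := by
    simpa [ConvolutionExistsAt] using hφs.convolutionExists_left (ContinuousLinearMap.mul ℝ ℝ) hφc hfgl x
  have hf_int : Integrable (fun y => φ y * f (x - y)) volume := by
    simpa [ConvolutionExistsAt] using hφs.convolutionExists_left (ContinuousLinearMap.mul ℝ ℝ) hφc hfl x
  have hg_int : Integrable (fun y => φ y * g (x - y)) volume := by
    simpa [ConvolutionExistsAt] using hφs.convolutionExists_left (ContinuousLinearMap.mul ℝ ℝ) hφc hgl x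
  have hφ_int : Integrable φ volume := hφc.integrable_of_hasCompactSupport hφs
  have key : (∫ y, φ y * ((f (x - y) - f x) * (g (x - y) - g x)))
      = (∫ y, φ y * (f (x - y) * g (x - y))) - f x * (∫ y, φ y * g (x - y))
        - g x * (∫ y, φ y * f (x - y)) + f x * g x * (∫ y, φ y) := by
    have : (fun y => φ y * ((f (x - y) - f x) * (g (x - y) - g x)))
        = fun y => (φ y * (f (x - y) * g (x - y)) - f x * (φ y * g (x - y)))
          - g x * (φ y * f (x - y)) + f x * g x * φ y := by
      ext y; ring
    have hsub1 : Integrable (fun y => φ y * (f (x - y) * g (x - y))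
        - f x * (φ y * g (x - y))) volume := hfg_int.sub (hg_int.const_mul _)
    have hsub2 : Integrable (fun y => φ y * (f (x - y) * g (x - y))
        - f x * (φ y * g (x - y)) - g x * (φ y * f (x - y))) volume :=
      hsub1.sub (hf_int.const_mul _)
    rw [this, ← integral_const_mul (f x) (fun y => φ y * g (x - y)),
      ← integral_const_mul (g x) (fun y => φ y * f (x - y)),
      ← integral_const_mul (f x * g x) φ,
      ← integral_sub hfg_int (hg_int.const_mul _),
      ← integral_sub hsub1 (hf_int.const_mul _),
      ← integral_add hsub2 (hφ_int.const_mul _)]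
  have hm1 : mollify η ε (fun z => f z * g z) x = ∫ y, φ y * (f (x - y) * g (x - y)) := by
    simp [mollify, hφ, mul_assoc]
  have hm2 : mollify η ε f x = ∫ y, φ y * f (x - y) := by
    simp [mollify, hφ, mul_assoc]
  have hm3 : mollify η ε g x = ∫ y, φ y * g (x - y) := by
    simp [mollify, hφ, mul_assoc]
  have hint : (∫ y, (ε ^ d)⁻¹ * η (ε⁻¹ • y) * ((f (x - y) - f x) * (g (x - y) - g x)))
      = ∫ y, φ y * ((f (x - y) - f x) * (g (x - y) - g x)) := by
    simp [hφ]
  rw [hint, key, hmass, hm1, hm2, hm3]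
  ring
end
end

section
/- Let ρ : R^d → [c₁,c₂] be measurable with 0 < c₁ ≤ c₂, π ∈ C²([c₁,c₂]), and η_ε a standard mollifier. Then for a.e. x, |π(ρ^ε(x)) − (π∘ρ)^ε(x)| ≤ C|ρ^ε(x) − ρ(x)|² + C((ρ(·) − ρ(x))² * η_ε)(x), where C depends only on π. -/
open MeasureTheory ENNReal Filter Topology

noncomputable section

variable {d : ℕ}

open Set

/-- Quadratic Taylor-type bound for a `C²` function on a compact interval. -/
lemma taylor_quad_aux {c₁ c₂ : ℝ} (hcc : c₁ ≤ c₂) (P : ℝ → ℝ)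
    (hP : ContDiffOn ℝ 2 P (Icc c₁ c₂)) :
    ∃ C : ℝ, 0 ≤ C ∧ ∀ s₀ ∈ Icc c₁ c₂, ∀ s ∈ Icc c₁ c₂,
      |P s - P s₀ - derivWithin P (Icc c₁ c₂) s₀ * (s - s₀)| ≤ C * (s - s₀) ^ 2 := by
  rcases eq_or_lt_of_le hcc with rfl | hlt
  · refine ⟨0, le_refl 0, ?_⟩
    intro s₀ hs₀ s hs
    simp only [Icc_self, mem_singleton_iff] at hs₀ hs
    subst hs₀; subst hs
    simp
  · set I := Icc c₁ c₂
    have hU : UniqueDiffOn ℝ I := uniqueDiffOn_Icc hlt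
    have hconv : Convex ℝ I := convex_Icc _ _
    have hcomp : IsCompact I := isCompact_Icc
    set P' := derivWithin P I with hP'def
    have hP'cd : ContDiffOn ℝ 1 P' I := hP.derivWithin hU (by norm_num)
    have hP'diff : DifferentiableOn ℝ P' I := hP'cd.differentiableOn (by norm_num)
    have hPdiff : DifferentiableOn ℝ P I := hP.differentiableOn (by norm_num)
    set P'' := derivWithin P' I
    have hP''cont : ContinuousOn P'' I := hP'cd.continuousOn_derivWithin hU (by norm_num)
    obtain ⟨M, hM⟩ := hcomp.exists_bound_of_continuousOn hP''cont
    set C := max M 0 with hCdef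
    have hC0 : 0 ≤ C := le_max_right _ _
    have hM' : ∀ u ∈ I, ‖P'' u‖ ≤ C := fun u hu => (hM u hu).trans (le_max_left _ _)
    have hLip : ∀ u ∈ I, ∀ v ∈ I, ‖P' v - P' u‖ ≤ C * ‖v - u‖ := fun u hu v hv =>
      hconv.norm_image_sub_le_of_norm_derivWithin_le hP'diff hM' hu hv
    refine ⟨C, hC0, ?_⟩
    intro s₀ hs₀ s hs
    set t : Set ℝ := I ∩ Metric.closedBall s₀ |s - s₀| with htdef
    have hs₀t : s₀ ∈ t := ⟨hs₀, by simp [abs_nonneg]⟩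
    have hst : s ∈ t := ⟨hs, by simp [Metric.mem_closedBall, Real.dist_eq]⟩
    have htconv : Convex ℝ t := hconv.inter (convex_closedBall _ _)
    have key := htconv.norm_image_sub_le_of_norm_hasDerivWithin_le
      (f := fun u => P u - P' s₀ * u) (f' := fun u => P' u - P' s₀)
      (C := C * |s - s₀|)
      (fun u hu => (((hPdiff u hu.1).hasDerivWithinAt.mono inter_subset_left).sub
        (by simpa using (hasDerivWithinAt_id u t).const_mul (P' s₀))))
      (fun u hu => by
        calc ‖P' u - P' s₀‖ ≤ C * ‖u - s₀‖ := hLip s₀ hs₀ u hu.1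
        _ ≤ C * |s - s₀| := by
            apply mul_le_mul_of_nonneg_left _ hC0
            simpa [Real.dist_eq] using hu.2)
      hs₀t hst
    have : P s - P' s₀ * s - (P s₀ - P' s₀ * s₀) = P s - P s₀ - P' s₀ * (s - s₀) := by ring
    rw [this] at key
    calc |P s - P s₀ - P' s₀ * (s - s₀)| ≤ C * |s - s₀| * |s - s₀| := key
    _ = C * (s - s₀) ^ 2 := by rw [mul_assoc, ← abs_mul, ← sq, abs_sq]

/-- The scaled mollifier is integrable. -/
lemma moll_integrable_aux (η : EuclideanSpace ℝ (Fin d) → ℝ) (ε : ℝ)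
    (hcont : Continuous η) (hsupp : Function.support η ⊆ Metric.closedBall 0 1)
    (hε : 0 < ε) :
    Integrable (fun y : EuclideanSpace ℝ (Fin d) => (ε ^ d)⁻¹ * η (ε⁻¹ • y)) := by
  have hc : Continuous (fun y : EuclideanSpace ℝ (Fin d) => η (ε⁻¹ • y)) :=
    hcont.comp (continuous_const_smul _)
  have hcs : HasCompactSupport (fun y : EuclideanSpace ℝ (Fin d) => η (ε⁻¹ • y)) := by
    apply HasCompactSupport.intro (K := Metric.closedBall 0 ε) (isCompact_closedBall 0 ε)
    intro y hy
    by_contra h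
    have : ε⁻¹ • y ∈ Metric.closedBall (0 : EuclideanSpace ℝ (Fin d)) 1 := by
      apply hsupp
      simp [Function.mem_support, h]
    rw [Metric.mem_closedBall, dist_zero_right, norm_smul] at this
    rw [Metric.mem_closedBall, dist_zero_right] at hy
    push_neg at hy
    have h1 : ‖ε⁻¹‖ * ‖y‖ > 1 := by
      rw [Real.norm_eq_abs, abs_of_pos (inv_pos.2 hε)]
      calc (1:ℝ) = ε⁻¹ * ε := by field_simp
      _ < ε⁻¹ * ‖y‖ := mul_lt_mul_of_pos_left hy (inv_pos.2 hε)
    linarith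
  exact (hc.integrable_of_hasCompactSupport hcs).const_mul _

/-- The scaled mollifier has unit mass. -/
lemma moll_mass_aux (η : EuclideanSpace ℝ (Fin d) → ℝ) (ε : ℝ)
    (hη : ∫ x, η x = 1) (hε : 0 < ε) :
    ∫ y : EuclideanSpace ℝ (Fin d), (ε ^ d)⁻¹ * η (ε⁻¹ • y) = 1 := by
  rw [integral_const_mul, Measure.integral_comp_inv_smul_of_nonneg volume η hε.le,
    finrank_euclideanSpace_fin, smul_eq_mul, hη]
  field_simp

/-- for measurable `ρ : ℝ^d → [c₁,c₂]`, `P ∈ C²([c₁,c₂])` and a standard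
mollifier, `|P(ρ^ε) − (P∘ρ)^ε| ≤ C|ρ^ε − ρ|² + C ((ρ(·) − ρ(x))² * η_ε)(x)` a.e.,
with `C` depending only on `P`. -/
theorem pressure_mollification_bound
    (hd : 0 < d) (c₁ c₂ : ℝ) (hc₁ : 0 < c₁) (hcc : c₁ ≤ c₂)
    (P : ℝ → ℝ) (hP : ContDiffOn ℝ 2 P (Icc c₁ c₂))
    (ρ : EuclideanSpace ℝ (Fin d) → ℝ) (hρm : Measurable ρ)
    (hρ : ∀ x, ρ x ∈ Icc c₁ c₂)
    (η : EuclideanSpace ℝ (Fin d) → ℝ) (hη : IsStdMollifier η) :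
    ∃ C : ℝ, 0 ≤ C ∧ ∀ ε : ℝ, 0 < ε →
      ∀ᵐ x : EuclideanSpace ℝ (Fin d),
        |P (mollify η ε ρ x) - mollify η ε (fun z => P (ρ z)) x| ≤
          C * (mollify η ε ρ x - ρ x) ^ 2 +
            C * ∫ y, (ε ^ d)⁻¹ * η (ε⁻¹ • y) * (ρ (x - y) - ρ x) ^ 2 := by
  classical
  obtain ⟨C, hC0, hTay⟩ := taylor_quad_aux hcc P hP
  set I := Icc c₁ c₂
  set P' := derivWithin P I with hP'def
  have hPcont : ContinuousOn P I := hP.continuousOn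
  have hPρm : Measurable (fun z => P (ρ z)) := by
    have h1 : Measurable (fun z => (⟨ρ z, hρ z⟩ : I)) := hρm.subtype_mk
    have h2 : Continuous (I.restrict P) := continuousOn_iff_continuous_restrict.1 hPcont
    exact h2.measurable.comp h1
  obtain ⟨K, hK⟩ := (isCompact_Icc (a := c₁) (b := c₂)).exists_bound_of_continuousOn hPcont
  refine ⟨C, hC0, ?_⟩
  intro ε hε
  refine Filter.Eventually.of_forall (fun x => ?_)
  set g : EuclideanSpace ℝ (Fin d) → ℝ := fun y => (ε ^ d)⁻¹ * η (ε⁻¹ • y) with hgdef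
  have hgnn : ∀ y, 0 ≤ g y := fun y =>
    mul_nonneg (inv_nonneg.2 (pow_nonneg hε.le _)) (hη.nonneg _)
  have hgint : Integrable g := moll_integrable_aux η ε hη.smooth.continuous hη.supp hε
  have hgmass : ∫ y, g y = 1 := moll_mass_aux η ε hη.mass hε
  have hIF : ∀ (F : EuclideanSpace ℝ (Fin d) → ℝ), Measurable F → (∃ K, ∀ y, |F y| ≤ K) →
      Integrable (fun y => g y * F (x - y)) := by
    intro F hFm ⟨KF, hKF⟩
    have hm : AEStronglyMeasurable (fun y : EuclideanSpace ℝ (Fin d) => F (x - y)) volume :=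
      (hFm.comp (measurable_const.sub measurable_id)).aestronglyMeasurable
    have := hgint.bdd_mul (c := KF) hm (Filter.Eventually.of_forall fun y => by simpa [Real.norm_eq_abs] using hKF (x - y))
    simpa [mul_comm] using this
  set s₀ := ρ x with hs₀def
  have hs₀I : s₀ ∈ I := hρ x
  set a := mollify η ε ρ x with hadef
  have hρabs : ∀ y, |ρ y| ≤ |c₂| + |c₁| := by
    intro y
    rw [abs_le]
    constructor
    · nlinarith [abs_nonneg c₂, neg_abs_le c₁, (hρ y).1]
    · nlinarith [abs_nonneg c₁, le_abs_self c₂, (hρ y).2]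
  have hiρ : Integrable (fun y => g y * ρ (x - y)) := hIF ρ hρm ⟨|c₂| + |c₁|, hρabs⟩
  have hiPρ : Integrable (fun y => g y * P (ρ (x - y))) :=
    hIF (fun z => P (ρ z)) hPρm ⟨K, fun y => by
      simpa [Real.norm_eq_abs] using hK (ρ y) (hρ y)⟩
  have hisq : Integrable (fun y => g y * (ρ (x - y) - s₀) ^ 2) :=
    hIF (fun z => (ρ z - s₀) ^ 2) ((hρm.sub measurable_const).pow_const 2)
      ⟨(|c₂| + |c₁| + |s₀|) ^ 2, fun y => by
        rw [abs_pow]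
        apply pow_le_pow_left₀ (abs_nonneg _) _ 2
        have h1 : |ρ y - s₀| ≤ |ρ y| + |s₀| := by
          simpa [sub_eq_add_neg] using abs_add_le (ρ y) (-s₀)
        have h2 := hρabs y
        linarith⟩
  have hmoll_eq : a = ∫ y, g y * ρ (x - y) := rfl
  have haI : a ∈ I := by
    constructor
    · have h1 : ∫ y, g y * c₁ ≤ ∫ y, g y * ρ (x - y) := by
        apply integral_mono (hgint.mul_const _) hiρ
        intro y
        exact mul_le_mul_of_nonneg_left (hρ (x - y)).1 (hgnn y)
      rwa [integral_mul_const, hgmass, one_mul] at h1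
    · have h1 : ∫ y, g y * ρ (x - y) ≤ ∫ y, g y * c₂ := by
        apply integral_mono hiρ (hgint.mul_const _)
        intro y
        exact mul_le_mul_of_nonneg_left (hρ (x - y)).2 (hgnn y)
      rwa [integral_mul_const, hgmass, one_mul] at h1
  set M := mollify η ε (fun z => P (ρ z)) x with hMdef
  have hMeq : M = ∫ y, g y * P (ρ (x - y)) := rfl
  set Q : EuclideanSpace ℝ (Fin d) → ℝ :=
    fun y => P (ρ (x - y)) - P s₀ - P' s₀ * (ρ (x - y) - s₀) with hQdef
  have i2 : Integrable (fun y => (P s₀ - P' s₀ * s₀) * g y) := hgint.const_mul _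
  have i3 : Integrable (fun y => P' s₀ * (g y * ρ (x - y))) := hiρ.const_mul _
  have i12 : Integrable
      (fun y => g y * P (ρ (x - y)) - (P s₀ - P' s₀ * s₀) * g y) := hiPρ.sub i2
  have e1 : (fun y => g y * Q y) = fun y =>
      g y * P (ρ (x - y)) - (P s₀ - P' s₀ * s₀) * g y - P' s₀ * (g y * ρ (x - y)) := by
    funext y; simp only [hQdef]; ring
  have hiQ : Integrable (fun y => g y * Q y) := by rw [e1]; exact i12.sub i3
  have j2 : (∫ y, (P s₀ - P' s₀ * s₀) * g y) = P s₀ - P' s₀ * s₀ := by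
    rw [integral_const_mul, hgmass, mul_one]
  have j3 : (∫ y, P' s₀ * (g y * ρ (x - y))) = P' s₀ * a := by
    rw [integral_const_mul, ← hmoll_eq]
  have hQint : (∫ y, g y * Q y) = M - P s₀ - P' s₀ * (a - s₀) := by
    rw [e1, integral_sub i12 i3, integral_sub hiPρ i2, j2, j3, ← hMeq]
    ring
  have hkey : P a - M = (P a - P s₀ - P' s₀ * (a - s₀)) - ∫ y, g y * Q y := by
    rw [hQint]; ring
  have hT1 : |P a - P s₀ - P' s₀ * (a - s₀)| ≤ C * (a - s₀) ^ 2 := hTay s₀ hs₀I a haI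
  have hisqC : Integrable (fun y => g y * (C * (ρ (x - y) - s₀) ^ 2)) := by
    have e2 : (fun y => g y * (C * (ρ (x - y) - s₀) ^ 2))
        = fun y => C * (g y * (ρ (x - y) - s₀) ^ 2) := by funext y; ring
    rw [e2]; exact hisq.const_mul C
  have hT2 : |(∫ y, g y * Q y)| ≤ C * ∫ y, g y * (ρ (x - y) - s₀) ^ 2 := by
    have habs : Integrable (fun y => |g y| * |Q y|) := by
      have : (fun y => |g y| * |Q y|) = fun y => |g y * Q y| := by
        funext y; exact (abs_mul (g y) (Q y)).symm
      rw [this]; exact hiQ.abs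
    calc |(∫ y, g y * Q y)| ≤ ∫ y, |g y| * |Q y| := by
          simpa [Real.norm_eq_abs] using
            norm_integral_le_integral_norm (fun y => g y * Q y) (μ := volume)
    _ ≤ ∫ y, g y * (C * (ρ (x - y) - s₀) ^ 2) := by
        apply integral_mono habs hisqC
        intro y
        dsimp only
        rw [abs_of_nonneg (hgnn y)]
        exact mul_le_mul_of_nonneg_left (hTay s₀ hs₀I _ (hρ (x - y))) (hgnn y)
    _ = C * ∫ y, g y * (ρ (x - y) - s₀) ^ 2 := by
        rw [← integral_const_mul]
        congr 1; funext y; ring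
  have hfin : |P a - M| ≤ C * (a - s₀) ^ 2 + C * ∫ y, g y * (ρ (x - y) - s₀) ^ 2 := by
    refine le_trans ?_ (add_le_add hT1 hT2)
    rw [hkey]
    exact abs_sub _ _
  exact hfin
end
end
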